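/- For any X ∈ B(H) and any ν ∈ [0,1], w(X + (1−2ν)X*) ≤ ((1+|1−2ν|)/2)·(‖X‖ + w(X̃)), where X̃ = |X|^{1/2} V |X|^{1/2} is the Aluthge transform of X with X = V|X| the polar decomposition. -/

import Mathlib

set_option synthInstance.maxHeartbeats 1000000
set_option maxHeartbeats 1000000

open scoped InnerProductSpace

/-- Numerical radius of a bounded operator on a complex Hilbert space. -/
noncomputable def numRad {H : Type*} [NormedAddCommGroup H] [InnerProductSpace ℂ H]
    (T : H →L[ℂ] H) : ℝ :=
  ⨆ z : {z : H // ‖z‖ = 1}, ‖(⟪T z.1, z.1⟫_ℂ : ℂ)‖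

/-- Crawford number. -/
noncomputable def crawford {H : Type*} [NormedAddCommGroup H] [InnerProductSpace ℂ H]
    (T : H →L[ℂ] H) : ℝ :=
  ⨅ z : {z : H // ‖z‖ = 1}, ‖(⟪T z.1, z.1⟫_ℂ : ℂ)‖

/-- The 2×2 block operator matrix `[[A, B], [C, D]]` acting on `H ⊕ H`
(the ℓ² direct sum `WithLp 2 (H × H)`), sending `(x, y)` to `(Ax + By, Cx + Dy)`. -/
noncomputable def blk {H : Type*} [NormedAddCommGroup H] [InnerProductSpace ℂ H]
    (A B C D : H →L[ℂ] H) : WithLp 2 (H × H) →L[ℂ] WithLp 2 (H × H) :=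
  (((WithLp.prodContinuousLinearEquiv 2 ℂ H H).symm.toContinuousLinearMap).comp
    (((A.comp (ContinuousLinearMap.fst ℂ H H) + B.comp (ContinuousLinearMap.snd ℂ H H)).prod
      (C.comp (ContinuousLinearMap.fst ℂ H H) + D.comp (ContinuousLinearMap.snd ℂ H H))))).comp
    ((WithLp.prodContinuousLinearEquiv 2 ℂ H H).toContinuousLinearMap)

/-!
The numerical radius `w` is a seminorm invariant under taking adjoints and under unimodular
scalars, so `w(X + cX*) ≤ (1 + |c|) w(X)`, and it remains to prove Yamazaki's inequality
`w(X) ≤ (‖X‖ + w(X̃)) / 2`. Fix a unit vector `x`, put `s = |X|^{1/2}`, rotate by a unimodular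
`u` with `⟨uXx, x⟩ = |⟨Xx, x⟩|` and let `U = uV`. Then
`(U + 1)s((U + 1)s)* - (U - 1)s((U - 1)s)* = 2(uX + (uX)*)`, hence
`4|⟨Xx, x⟩| ≤ ‖(U + 1)s‖² = ‖2|X| + uX̃ + (uX̃)*‖ ≤ 2‖X‖ + 2w(X̃)`. The middle equality holds
because `V*V` fixes `|X| = s²`, hence fixes `s`; the last step because the norm of a self-adjoint
operator is the supremum of its Rayleigh quotients.
-/

open ComplexConjugate

section NumericalRadius

variable {H : Type*} [NormedAddCommGroup H] [InnerProductSpace ℂ H]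

lemma bddAbove_norm_inner_apply_self (T : H →L[ℂ] H) :
    BddAbove (Set.range fun z : {z : H // ‖z‖ = 1} ↦ ‖⟪T z.1, z.1⟫_ℂ‖) := by
  refine ⟨‖T‖, ?_⟩
  rintro _ ⟨⟨z, hz⟩, rfl⟩
  calc ‖⟪T z, z⟫_ℂ‖ ≤ ‖T z‖ * ‖z‖ := norm_inner_le_norm _ _
    _ ≤ ‖T‖ := by simpa [hz] using T.le_opNorm z

lemma numRad_nonneg (T : H →L[ℂ] H) : 0 ≤ numRad T :=
  Real.iSup_nonneg fun _ ↦ norm_nonneg _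

lemma norm_inner_apply_self_le_numRad (T : H →L[ℂ] H) {x : H} (hx : ‖x‖ = 1) :
    ‖⟪T x, x⟫_ℂ‖ ≤ numRad T :=
  le_ciSup (bddAbove_norm_inner_apply_self T) ⟨x, hx⟩

lemma numRad_le_bound {T : H →L[ℂ] H} {M : ℝ} (hM : 0 ≤ M)
    (h : ∀ x : H, ‖x‖ = 1 → ‖⟪T x, x⟫_ℂ‖ ≤ M) : numRad T ≤ M :=
  Real.iSup_le (fun z ↦ h z.1 z.2) hM

lemma numRad_add_le (S T : H →L[ℂ] H) : numRad (S + T) ≤ numRad S + numRad T :=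
  numRad_le_bound (add_nonneg (numRad_nonneg S) (numRad_nonneg T)) fun x hx ↦ by
    rw [add_apply, inner_add_left]
    exact (norm_add_le _ _).trans (add_le_add (norm_inner_apply_self_le_numRad S hx)
      (norm_inner_apply_self_le_numRad T hx))

lemma numRad_smul (c : ℂ) (T : H →L[ℂ] H) : numRad (c • T) = ‖c‖ * numRad T := by
  simp only [numRad, smul_apply, inner_smul_left, norm_mul, RCLike.norm_conj]
  exact (Real.mul_iSup_of_nonneg (norm_nonneg c) _).symm

lemma numRad_adjoint [CompleteSpace H] (T : H →L[ℂ] H) :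
    numRad (ContinuousLinearMap.adjoint T) = numRad T := by
  simp only [numRad, ContinuousLinearMap.adjoint_inner_left, ← inner_conj_symm (T _),
    RCLike.norm_conj]

lemma abs_rayleighQuotient_le_numRad (T : H →L[ℂ] H) (x : H) :
    |T.rayleighQuotient x| ≤ numRad T := by
  rcases eq_or_ne x 0 with rfl | hx
  · simpa using numRad_nonneg T
  have hunit : ‖((‖x‖⁻¹ : ℝ) : ℂ) • x‖ = 1 := by
    rw [norm_smul, Complex.norm_real, norm_inv, norm_norm, inv_mul_cancel₀ (norm_ne_zero_iff.2 hx)]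
  rw [← T.rayleigh_smul x (c := ((‖x‖⁻¹ : ℝ) : ℂ)) (by simpa using hx),
    ContinuousLinearMap.rayleighQuotient, ContinuousLinearMap.reApplyInnerSelf_apply, hunit,
    one_pow, div_one]
  exact (RCLike.abs_re_le_norm _).trans (norm_inner_apply_self_le_numRad T hunit)

lemma norm_add_star_le_two_mul_numRad [CompleteSpace H] (T : H →L[ℂ] H) :
    ‖T + star T‖ ≤ 2 * numRad T := by
  have hsa : IsSelfAdjoint (T + star T) := by
    simp only [IsSelfAdjoint, star_add, star_star, add_comm]
  rw [ContinuousLinearMap.norm_eq_iSup_rayleighQuotient _ hsa.isSymmetric]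
  refine ciSup_le fun x ↦ ?_
  have hstar : (star T).rayleighQuotient x = T.rayleighQuotient x := by
    simp only [ContinuousLinearMap.rayleighQuotient, ContinuousLinearMap.reApplyInnerSelf_apply,
      ContinuousLinearMap.star_eq_adjoint, ContinuousLinearMap.adjoint_inner_left,
      ← inner_conj_symm (T _), RCLike.conj_re]
  rw [ContinuousLinearMap.rayleighQuotient_add, hstar, ← two_mul, abs_mul, abs_two]
  exact mul_le_mul_of_nonneg_left (abs_rayleighQuotient_le_numRad T x) zero_le_two

end NumericalRadius

lemma Complex.exists_norm_eq_one_conj_mul_eq_norm (z : ℂ) :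
    ∃ u : ℂ, ‖u‖ = 1 ∧ conj u * z = ‖z‖ := by
  set u := Complex.exp (z.arg * Complex.I)
  have hu : ‖u‖ = 1 := Complex.norm_exp_ofReal_mul_I _
  refine ⟨u, hu, ?_⟩
  conv_lhs => rw [← Complex.norm_mul_exp_arg_mul_I z]
  rw [mul_left_comm, Complex.conj_mul', hu]
  simp

section StarRing

variable {A : Type*} [Ring A] [StarRing A]

lemma add_one_mul_mul_star_sub_sub_one_mul_mul_star (a b : A) :
    (a + 1) * b * star ((a + 1) * b) - (a - 1) * b * star ((a - 1) * b) =
      2 * (a * (b * star b) + star (a * (b * star b))) := by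
  simp only [star_mul, star_add, star_sub, star_one, star_star]
  noncomm_ring

lemma star_add_one_mul_mul_add_one_mul {a s : A} (hs : IsSelfAdjoint s)
    (ha : star a * a * s = s) :
    star ((a + 1) * s) * ((a + 1) * s) = s * s + s * s + (s * a * s + star (s * a * s)) := by
  have expand : star ((a + 1) * s) * ((a + 1) * s) =
      s * (star a * a * s) + s * s + (s * a * s + s * star a * s) := by
    simp only [star_mul, star_add, star_one, hs.star_eq]
    noncomm_ring
  rw [expand, ha, star_mul, star_mul, hs.star_eq, mul_assoc s (star a)]

end StarRing

lemma mul_eq_zero_of_mul_mul_star_self_eq_zero {A : Type*} [NonUnitalNormedRing A] [StarRing A]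
    [CStarRing A] {a b : A} (h : a * (b * star b) = 0) : a * b = 0 := by
  rw [← CStarRing.mul_star_self_eq_zero_iff, star_mul, ← mul_assoc, mul_assoc a, h, zero_mul]

section CStarAlgebra

variable {A : Type*} [CStarAlgebra A] [PartialOrder A] [StarOrderedRing A]

lemma mul_sqrt_eq_of_mul_eq {a m : A} (hm : 0 ≤ m) (h : a * m = m) :
    a * CFC.sqrt m = CFC.sqrt m := by
  have hsq : CFC.sqrt m * star (CFC.sqrt m) = m := by
    rw [(CFC.sqrt_nonneg m).star_eq, CFC.sqrt_mul_sqrt_self m hm]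
  have hzero : (a - 1) * (CFC.sqrt m * star (CFC.sqrt m)) = 0 := by
    rw [hsq, sub_mul, h, one_mul, sub_self]
  simpa [sub_mul, sub_eq_zero] using mul_eq_zero_of_mul_mul_star_self_eq_zero hzero

noncomputable def aluthge (X V : A) : A :=
  CFC.sqrt (CFC.abs X) * V * CFC.sqrt (CFC.abs X)

end CStarAlgebra

section Operators

variable {H : Type*} [NormedAddCommGroup H] [InnerProductSpace ℂ H] [CompleteSpace H]

lemma re_inner_star_apply_self (T : H →L[ℂ] H) (x : H) :
    (⟪(star T) x, x⟫_ℂ).re = (⟪T x, x⟫_ℂ).re := by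
  rw [ContinuousLinearMap.star_eq_adjoint, ContinuousLinearMap.adjoint_inner_left,
    ← inner_conj_symm, Complex.conj_re]

lemma re_inner_mul_star_apply_self (B : H →L[ℂ] H) (x : H) :
    (⟪(B * star B) x, x⟫_ℂ).re = ‖(star B) x‖ ^ 2 := by
  rw [mul_apply_eq_comp, ← ContinuousLinearMap.adjoint_inner_right,
    ← ContinuousLinearMap.star_eq_adjoint, inner_self_eq_norm_sq_to_K]
  norm_cast

lemma four_mul_re_inner_mul_self_le {U s : H →L[ℂ] H} (hs : IsSelfAdjoint s)
    (hU : star U * U * s = s) {x : H} (hx : ‖x‖ = 1) :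
    4 * (⟪(U * (s * s)) x, x⟫_ℂ).re ≤ 2 * ‖s * s‖ + 2 * numRad (s * U * s) := by
  set S := (U + 1) * s
  set W := (U - 1) * s
  have hdiff : S * star S - W * star W = 2 * (U * (s * s) + star (U * (s * s))) := by
    rw [add_one_mul_mul_star_sub_sub_one_mul_mul_star, hs.star_eq]
  calc 4 * (⟪(U * (s * s)) x, x⟫_ℂ).re = (⟪(S * star S - W * star W) x, x⟫_ℂ).re := by
        rw [hdiff, two_mul, add_apply, add_apply, inner_add_left, inner_add_left, Complex.add_re,
          Complex.add_re, re_inner_star_apply_self]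
        ring
    _ = ‖(star S) x‖ ^ 2 - ‖(star W) x‖ ^ 2 := by
        rw [sub_apply, inner_sub_left, Complex.sub_re, re_inner_mul_star_apply_self,
          re_inner_mul_star_apply_self]
    _ ≤ ‖(star S) x‖ ^ 2 := by linarith [sq_nonneg ‖(star W) x‖]
    _ ≤ ‖S‖ ^ 2 := by
        gcongr
        simpa [hx] using (star S).le_opNorm x
    _ = ‖star S * S‖ := by rw [CStarRing.norm_star_mul_self, sq]
    _ = ‖s * s + s * s + (s * U * s + star (s * U * s))‖ := by
        rw [star_add_one_mul_mul_add_one_mul hs hU]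
    _ ≤ 2 * ‖s * s‖ + 2 * numRad (s * U * s) := by
        grw [norm_add_le, norm_add_le, norm_add_star_le_two_mul_numRad]
        linarith

theorem numRad_le_norm_add_numRad_aluthge_div_two {X V : H →L[ℂ] H}
    (hV : X = V * CFC.abs X) (hV' : star V * X = CFC.abs X) :
    numRad X ≤ (‖X‖ + numRad (aluthge X V)) / 2 := by
  set s := CFC.sqrt (CFC.abs X)
  have hs : IsSelfAdjoint s := (CFC.sqrt_nonneg _).isSelfAdjoint
  have hss : s * s = CFC.abs X := CFC.sqrt_mul_sqrt_self _ (CFC.abs_nonneg X)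
  have hVs : star V * V * s = s :=
    mul_sqrt_eq_of_mul_eq (CFC.abs_nonneg X) (by rw [mul_assoc, ← hV, hV'])
  refine numRad_le_bound (by linarith [numRad_nonneg (aluthge X V), norm_nonneg X]) fun x hx ↦ ?_
  obtain ⟨u, hu, hphase⟩ := Complex.exists_norm_eq_one_conj_mul_eq_norm ⟪X x, x⟫_ℂ
  have hU : star (u • V) * (u • V) * s = s := by
    rw [star_smul, smul_mul_smul_comm, RCLike.star_def, Complex.conj_mul', hu]
    simpa using hVs
  have haluthge : aluthge X V = s * V * s := rfl
  have key := four_mul_re_inner_mul_self_le hs hU hx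
  rw [hss, smul_mul_assoc, ← hV, smul_apply, inner_smul_left, hphase, Complex.ofReal_re,
    CFC.norm_abs, mul_smul_comm, smul_mul_assoc, numRad_smul, hu, one_mul] at key
  rw [haluthge]
  linarith

end Operators

theorem numRad_skew_le_aluthge_general {H : Type*} [NormedAddCommGroup H] [InnerProductSpace ℂ H]
    [CompleteSpace H] {ν : ℝ} (X V : H →L[ℂ] H)
    (hV : X = V * CFC.sqrt (star X * X))
    (hV' : star V * X = CFC.sqrt (star X * X)) :
    numRad (X + ((1 - 2*ν : ℝ) : ℂ) • X.adjoint) ≤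
      ((1 + |1 - 2*ν|) / 2) *
        (‖X‖ + numRad (CFC.sqrt (CFC.sqrt (star X * X)) * V *
          CFC.sqrt (CFC.sqrt (star X * X)))) := by
  calc numRad (X + ((1 - 2*ν : ℝ) : ℂ) • X.adjoint)
      ≤ numRad X + ‖((1 - 2*ν : ℝ) : ℂ)‖ * numRad X := by
        grw [numRad_add_le, numRad_smul, numRad_adjoint]
    _ = (1 + |1 - 2*ν|) * numRad X := by
        rw [Complex.norm_real, Real.norm_eq_abs]
        ring
    _ ≤ (1 + |1 - 2*ν|) * ((‖X‖ + numRad (aluthge X V)) / 2) := by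
        gcongr
        exact numRad_le_norm_add_numRad_aluthge_div_two hV hV'
    _ = _ := by
        rw [aluthge, CFC.abs]
        ring

theorem numRad_skew_le_aluthge {H : Type*} [NormedAddCommGroup H] [InnerProductSpace ℂ H]
    [CompleteSpace H] {ν : ℝ} (hν : ν ∈ Set.Icc (0 : ℝ) 1) (X V : H →L[ℂ] H)
    (hV : X = V * CFC.sqrt (star X * X))
    (hV' : star V * X = CFC.sqrt (star X * X)) :
    numRad (X + ((1 - 2*ν : ℝ) : ℂ) • X.adjoint) ≤
      ((1 + |1 - 2*ν|) / 2) *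
        (‖X‖ + numRad (CFC.sqrt (CFC.sqrt (star X * X)) * V *
          CFC.sqrt (CFC.sqrt (star X * X)))) :=
  numRad_skew_le_aluthge_general X V hV hV'
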